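/- arXiv:2601.14642 — 7 statements merged into one kernel-verified Lean document; each statement's English description precedes it below -/
import Mathlib

section
/- Let α be a type, Inst ⊆ α a set, and let ib and ob be binary relations on α that are both irreflexive and transitive and satisfy (ob;[Inst]) ⊆ ib and ([Inst];ib) ⊆ ob. Then there exist binary relations IB and OB on α with ib ⊆ IB and ob ⊆ OB such that: IB and OB are irreflexive and transitive, IB and OB are total (for all a ≠ b, the relation holds of (a,b) or of (b,a)), (OB;[Inst]) ⊆ IB, and ([Inst];IB) ⊆ OB. (Theorem: the 'issued-before' and 'observed-before' relations of a consistent RDMA execution can be jointly extended to total strict orders preserving their closure laws with respect to the instantaneous events.) -/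
/-!
Extend `ib` to an arbitrary strict total order `IB`, and then let `OB` be any strict total
extension of `ob ∪ [Inst];IB`. This union is acyclic: a cycle either consists of `ob`-steps
only, or it contains a step `a → b` with `a ∈ Inst` and `IB a b`, and then the way back from
`b` to `a` is an `ob`-path ending in `Inst`, hence lies in `IB`. The law `(OB;[Inst]) ⊆ IB`
comes for free: if `OB a b` with `b ∈ Inst` but not `IB a b`, totality gives `IB b a`,
hence `OB b a`.
-/

open Relation

theorem exists_isStrictTotalOrder_extension {α : Type*} (r : α → α → Prop)
    [IsStrictOrder α r] : ∃ s : α → α → Prop, r ≤ s ∧ IsStrictTotalOrder α s := by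
  let := partialOrderOfSO r
  refine ⟨fun a b => toLinearExtension a < toLinearExtension b, fun a b hab => ?_,
    inferInstanceAs (IsStrictTotalOrder (LinearExtension α) (· < ·))⟩
  exact lt_of_le_of_ne (toLinearExtension.monotone (Or.inr hab)) (ne_of_irrefl (r := r) hab)

def obInstIb {α : Type*} (Inst : Set α) (ob ib : α → α → Prop) (a b : α) : Prop :=
  ob a b ∨ (a ∈ Inst ∧ ib a b)

section

variable {α : Type*} {Inst : Set α} {ob ib : α → α → Prop}

theorem ib_of_ib_of_reflGen_ob [IsTrans α ib] (hob_ib : ∀ a b, ob a b → b ∈ Inst → ib a b)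
    {a b c : α} (hab : ib a b) (hbc : ReflGen ob b c) (hc : c ∈ Inst) : ib a c := by
  rcases hbc with _ | hbc
  exacts [hab, _root_.trans hab (hob_ib _ _ hbc hc)]

theorem transGen_obInstIb_cases [IsTrans α ob] [IsTrans α ib]
    (hob_ib : ∀ a b, ob a b → b ∈ Inst → ib a b) {x y : α}
    (h : TransGen (obInstIb Inst ob ib) x y) :
    ob x y ∨ ∃ a b, ReflGen ob x a ∧ a ∈ Inst ∧ ib a b ∧ ReflGen ob b y := by
  induction h with
  | single h =>
    rcases h with h | ⟨hx, h⟩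
    exacts [.inl h, .inr ⟨_, _, .refl, hx, h, .refl⟩]
  | @tail y z _ hyz ih =>
    rcases hyz with hyz | ⟨hy, hyz⟩ <;> rcases ih with hxy | ⟨a, b, hxa, ha, hab, hby⟩
    · exact .inl (_root_.trans hxy hyz)
    · exact .inr ⟨a, b, hxa, ha, hab, _root_.trans hby (.single hyz)⟩
    · exact .inr ⟨y, z, .single hxy, hy, hyz, .refl⟩
    · exact .inr ⟨a, z, hxa, ha, _root_.trans (ib_of_ib_of_reflGen_ob hob_ib hab hby hy) hyz,
        .refl⟩

theorem isStrictOrder_transGen_obInstIb [IsStrictOrder α ob] [IsStrictOrder α ib]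
    (hob_ib : ∀ a b, ob a b → b ∈ Inst → ib a b) :
    IsStrictOrder α (TransGen (obInstIb Inst ob ib)) where
  irrefl x hxx := by
    rcases transGen_obInstIb_cases hob_ib hxx with hxx | ⟨a, b, hxa, ha, hab, hbx⟩
    · exact irrefl x hxx
    · exact irrefl a (ib_of_ib_of_reflGen_ob hob_ib hab (_root_.trans hbx hxa) ha)

end

theorem extend_ibob_general {α : Type*} (Inst : Set α) (ib ob : α → α → Prop)
    (hib_irr : Irreflexive ib) (hib_trans : Transitive ib)
    (hob_irr : Irreflexive ob) (hob_trans : Transitive ob)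
    (h_ob_inst : ∀ a b, ob a b → b ∈ Inst → ib a b) :
    ∃ IB OB : α → α → Prop,
      (∀ a b, ib a b → IB a b) ∧
      (∀ a b, ob a b → OB a b) ∧
      Irreflexive IB ∧ Transitive IB ∧
      Irreflexive OB ∧ Transitive OB ∧
      (∀ a b, a ≠ b → IB a b ∨ IB b a) ∧
      (∀ a b, a ≠ b → OB a b ∨ OB b a) ∧
      (∀ a b, OB a b → b ∈ Inst → IB a b) ∧
      (∀ a b, a ∈ Inst → IB a b → OB a b) := by
  have : IsStrictOrder α ib := { irrefl := hib_irr, trans := fun _ _ _ => @hib_trans _ _ _ }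
  have : IsStrictOrder α ob := { irrefl := hob_irr, trans := fun _ _ _ => @hob_trans _ _ _ }
  obtain ⟨IB, hib_IB, _⟩ := exists_isStrictTotalOrder_extension ib
  have := isStrictOrder_transGen_obInstIb (Inst := Inst) fun a b h hb =>
    hib_IB a b (h_ob_inst a b h hb)
  obtain ⟨OB, hS_OB, _⟩ := exists_isStrictTotalOrder_extension (TransGen (obInstIb Inst ob IB))
  have hOB_of : ∀ a b, obInstIb Inst ob IB a b → OB a b := fun a b h => hS_OB a b (.single h)
  have total {r : α → α → Prop} [Std.Trichotomous r] (a b : α) (hne : a ≠ b) : r a b ∨ r b a :=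
    (trichotomous_of r a b).imp_right (Or.resolve_left · hne)
  refine ⟨IB, OB, hib_IB, fun a b h => hOB_of a b (.inl h), irrefl_of IB,
    fun _ _ _ => trans_of IB, irrefl_of OB, fun _ _ _ => trans_of OB, total, total, ?_,
    fun a b ha h => hOB_of a b (.inr ⟨ha, h⟩)⟩
  intro a b hab hb
  rcases trichotomous_of IB a b with h | rfl | h
  exacts [h, (irrefl_of OB a hab).elim, (asymm_of OB hab (hOB_of b a (.inr ⟨hb, h⟩))).elim]

/-- Theorem `extend-ibob`: the issued-before (`ib`) and observed-before (`ob`)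
relations of a consistent RDMA execution can be jointly extended to total strict
orders `IB` and `OB` preserving the closure laws with respect to the set `Inst`
of instantaneous events. -/
theorem extend_ibob {α : Type*} (Inst : Set α) (ib ob : α → α → Prop)
    (hib_irr : Irreflexive ib) (hib_trans : Transitive ib)
    (hob_irr : Irreflexive ob) (hob_trans : Transitive ob)
    (h_ob_inst : ∀ a b, ob a b → b ∈ Inst → ib a b)
    (h_inst_ib : ∀ a b, a ∈ Inst → ib a b → ob a b) :
    ∃ IB OB : α → α → Prop,
      (∀ a b, ib a b → IB a b) ∧
      (∀ a b, ob a b → OB a b) ∧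
      Irreflexive IB ∧ Transitive IB ∧
      Irreflexive OB ∧ Transitive OB ∧
      (∀ a b, a ≠ b → IB a b ∨ IB b a) ∧
      (∀ a b, a ≠ b → OB a b ∨ OB b a) ∧
      (∀ a b, OB a b → b ∈ Inst → IB a b) ∧
      (∀ a b, a ∈ Inst → IB a b → OB a b) :=
  extend_ibob_general Inst ib ob hib_irr hib_trans hob_irr hob_trans h_ob_inst
end

section
/- Let α be a type, Inst ⊆ α a set, and let ib and ob be irreflexive transitive binary relations on α with (ob;[Inst]) ⊆ ib and ([Inst];ib) ⊆ ob. Suppose there exist a ≠ b in α with ¬ib a b and ¬ib b a. Define ib' as the transitive closure of ib ∪ {(a,b)} and ob' as the transitive closure of ob ∪ ([Inst];ib'). Then ib' and ob' are irreflexive and transitive, ib is strictly contained in ib', ob ⊆ ob', (ob';[Inst]) ⊆ ib', and ([Inst];ib') ⊆ ob'. (The single-step extension used in the proof of the joint order-extension theorem for issued-before and observed-before.) -/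
/-!
Write `r?` for the reflexive closure of `r`. Every `ib'`-path uses the new edge `(a,b)` at most
once, since returning from `b` to `a` would need `ib b a`; so `ib' x y` means `ib x y` or
`x ib? a` and `b ib? y`, and a cycle would give `b ib? a`.

Likewise every `ob'`-path collapses to `ob x y` or to `x ob? u`, `u ∈ Inst`, `u ib' v`,
`v ob? y`: an `ob`-step that lands in `Inst` is an `ib`-step, so the whole middle part merges
into a single `ib'`-step. Ending in `Inst` or closing a cycle turns the trailing `ob?` into
`ib'?` as well, which yields `ob';[Inst] ⊆ ib'` and irreflexivity.
-/

open Relation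

section

variable {α : Type*} {r : α → α → Prop} {x y z : α}

theorem Relation.ReflGen.trans_of_transitive (hr : Transitive r) :
    ReflGen r x y → ReflGen r y z → ReflGen r x z
  | .refl, h => h
  | h, .refl => h
  | .single hxy, .single hyz => .single (hr hxy hyz)

theorem Relation.ReflGen.trans_left (hr : Transitive r) : ReflGen r x y → r y z → r x z
  | .refl, h => h
  | .single hxy, hyz => hr hxy hyz

theorem Relation.ReflGen.trans_right (hr : Transitive r) (hxy : r x y) : ReflGen r y z → r x z
  | .refl => hxy
  | .single hyz => hr hxy hyz

section AddEdge

variable {a b : α}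

def addEdge (r : α → α → Prop) (a b : α) : α → α → Prop :=
  fun u v => r u v ∨ (u = a ∧ v = b)

theorem transGen_addEdge_cases (hr : Transitive r) (hab : a ≠ b) (hba : ¬ r b a)
    (h : TransGen (addEdge r a b) x y) : r x y ∨ (ReflGen r x a ∧ ReflGen r b y) := by
  induction h with
  | single h =>
    rcases h with h | ⟨rfl, rfl⟩
    · exact .inl h
    · exact .inr ⟨.refl, .refl⟩
  | @tail y w _ hstep ih =>
    rcases hstep with hyw | ⟨rfl, rfl⟩
    · rcases ih with hxy | ⟨hxa, hby⟩
      · exact .inl (hr hxy hyw)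
      · exact .inr ⟨hxa, hby.trans_of_transitive hr (.single hyw)⟩
    · rcases ih with hxa | ⟨-, hba'⟩
      · exact .inr ⟨.single hxa, .refl⟩
      · cases hba' with
        | refl => exact absurd rfl hab
        | single h => exact absurd h hba

theorem irreflexive_transGen_addEdge (hirr : Irreflexive r) (hr : Transitive r) (hab : a ≠ b)
    (hba : ¬ r b a) : Irreflexive (TransGen (addEdge r a b)) := by
  intro x hx
  rcases transGen_addEdge_cases hr hab hba hx with hxx | ⟨hxa, hbx⟩
  · exact hirr x hxx
  · cases hbx.trans_of_transitive hr hxa with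
    | refl => exact hab rfl
    | single h => exact hba h

end AddEdge

section UnionRestrict

variable {o s : α → α → Prop} {P : Set α}

def unionRestrict (o : α → α → Prop) (P : Set α) (s : α → α → Prop) : α → α → Prop :=
  fun u v => o u v ∨ (u ∈ P ∧ s u v)

variable (hos : ∀ x y, o x y → y ∈ P → s x y)
include hos

theorem reflGen_of_reflGen_of_mem (h : ReflGen o x y) (hy : y ∈ P) : ReflGen s x y :=
  match h with
  | .refl => .refl
  | .single h => .single (hos _ _ h hy)

theorem transGen_unionRestrict_cases (ho : Transitive o) (hs : Transitive s)
    (h : TransGen (unionRestrict o P s) x y) :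
    o x y ∨ ∃ u v, ReflGen o x u ∧ u ∈ P ∧ s u v ∧ ReflGen o v y := by
  induction h with
  | @single y h =>
    rcases h with h | ⟨hx, hxy⟩
    · exact .inl h
    · exact .inr ⟨x, y, .refl, hx, hxy, .refl⟩
  | @tail y w _ hstep ih =>
    rcases hstep with hyw | ⟨hy, hyw⟩
    · rcases ih with hxy | ⟨u, v, hxu, hu, huv, hvy⟩
      · exact .inl (ho hxy hyw)
      · exact .inr ⟨u, v, hxu, hu, huv, hvy.trans_of_transitive ho (.single hyw)⟩
    · rcases ih with hxy | ⟨u, v, hxu, hu, huv, hvy⟩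
      · exact .inr ⟨y, w, .single hxy, hy, hyw, .refl⟩
      · have huy : s u y := ReflGen.trans_right hs huv (reflGen_of_reflGen_of_mem hos hvy hy)
        exact .inr ⟨u, w, hxu, hu, hs huy hyw, .refl⟩

theorem transGen_unionRestrict_of_mem (ho : Transitive o) (hs : Transitive s)
    (h : TransGen (unionRestrict o P s) x y) (hy : y ∈ P) : s x y := by
  rcases transGen_unionRestrict_cases hos ho hs h with hxy | ⟨u, v, hxu, hu, huv, hvy⟩
  · exact hos x y hxy hy
  · exact (reflGen_of_reflGen_of_mem hos hxu hu).trans_left hs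
      (ReflGen.trans_right hs huv (reflGen_of_reflGen_of_mem hos hvy hy))

theorem irreflexive_transGen_unionRestrict (ho_irr : Irreflexive o) (ho : Transitive o)
    (hs_irr : Irreflexive s) (hs : Transitive s) : Irreflexive (TransGen (unionRestrict o P s)) := by
  intro x hx
  rcases transGen_unionRestrict_cases hos ho hs hx with hxx | ⟨u, v, hxu, hu, huv, hvx⟩
  · exact ho_irr x hxx
  · have hvu : ReflGen s v u :=
      reflGen_of_reflGen_of_mem hos (hvx.trans_of_transitive ho hxu) hu
    exact hs_irr u (ReflGen.trans_right hs huv hvu)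

end UnionRestrict

end

theorem extend_ibob_step_general {α : Type*} (Inst : Set α) (ib ob : α → α → Prop)
    (hib_irr : Irreflexive ib) (hib_trans : Transitive ib)
    (hob_irr : Irreflexive ob) (hob_trans : Transitive ob)
    (h_ob_inst : ∀ x y, ob x y → y ∈ Inst → ib x y)
    (a b : α) (hab : a ≠ b) (hnab : ¬ ib a b) (hnba : ¬ ib b a)
    (ib' ob' : α → α → Prop)
    (hib' : ib' = Relation.TransGen (fun u v => ib u v ∨ (u = a ∧ v = b)))
    (hob' : ob' = Relation.TransGen (fun u v => ob u v ∨ (u ∈ Inst ∧ ib' u v))) :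
    Irreflexive ib' ∧ Transitive ib' ∧
    Irreflexive ob' ∧ Transitive ob' ∧
    (∀ x y, ib x y → ib' x y) ∧ (∃ x y, ib' x y ∧ ¬ ib x y) ∧
    (∀ x y, ob x y → ob' x y) ∧
    (∀ x y, ob' x y → y ∈ Inst → ib' x y) ∧
    (∀ x y, x ∈ Inst → ib' x y → ob' x y) := by
  change ib' = TransGen (addEdge ib a b) at hib'
  change ob' = TransGen (unionRestrict ob Inst ib') at hob'
  have hib_sub : ∀ x y, ib x y → ib' x y := fun x y h => hib' ▸ .single (.inl h)
  have hib'_irr : Irreflexive ib' := hib' ▸ irreflexive_transGen_addEdge hib_irr hib_trans hab hnba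
  have hib'_trans : Transitive ib' := hib' ▸ fun _ _ _ => TransGen.trans
  have hob_inst' : ∀ x y, ob x y → y ∈ Inst → ib' x y :=
    fun x y h hy => hib_sub x y (h_ob_inst x y h hy)
  subst hob'
  exact ⟨hib'_irr, hib'_trans,
    irreflexive_transGen_unionRestrict hob_inst' hob_irr hob_trans hib'_irr hib'_trans,
    fun _ _ _ => TransGen.trans, hib_sub, ⟨a, b, hib' ▸ .single (.inr ⟨rfl, rfl⟩), hnab⟩,
    fun _ _ h => .single (.inl h),
    fun _ _ h hy => transGen_unionRestrict_of_mem hob_inst' hob_trans hib'_trans h hy,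
    fun _ _ hx h => .single (.inr ⟨hx, h⟩)⟩

/-- The single-step extension used in the proof of the joint order-extension
theorem (`extend-ibob`) for the issued-before (`ib`) and observed-before (`ob`)
relations: adding an unordered pair `(a,b)` to `ib` and closing up yields
relations `ib'` and `ob'` that are irreflexive, transitive, strictly extend
`ib`, extend `ob`, and satisfy the closure laws with respect to `Inst`. -/
theorem extend_ibob_step {α : Type*} (Inst : Set α) (ib ob : α → α → Prop)
    (hib_irr : Irreflexive ib) (hib_trans : Transitive ib)
    (hob_irr : Irreflexive ob) (hob_trans : Transitive ob)
    (h_ob_inst : ∀ x y, ob x y → y ∈ Inst → ib x y)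
    (h_inst_ib : ∀ x y, x ∈ Inst → ib x y → ob x y)
    (a b : α) (hab : a ≠ b) (hnab : ¬ ib a b) (hnba : ¬ ib b a)
    (ib' ob' : α → α → Prop)
    (hib' : ib' = Relation.TransGen (fun u v => ib u v ∨ (u = a ∧ v = b)))
    (hob' : ob' = Relation.TransGen (fun u v => ob u v ∨ (u ∈ Inst ∧ ib' u v))) :
    Irreflexive ib' ∧ Transitive ib' ∧
    Irreflexive ob' ∧ Transitive ob' ∧
    (∀ x y, ib x y → ib' x y) ∧ (∃ x y, ib' x y ∧ ¬ ib x y) ∧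
    (∀ x y, ob x y → ob' x y) ∧
    (∀ x y, ob' x y → y ∈ Inst → ib' x y) ∧
    (∀ x y, x ∈ Inst → ib' x y → ob' x y) :=
  extend_ibob_step_general Inst ib ob hib_irr hib_trans hob_irr hob_trans h_ob_inst a b hab hnab
    hnba ib' ob' hib' hob'
end

section
/- Let α be a type, Inst ⊆ α a set, and let ib and ob be irreflexive transitive binary relations on α with (ob;[Inst]) ⊆ ib and ([Inst];ib) ⊆ ob. Suppose a ≠ b with ¬ib a b and ¬ib b a, and define ib' as the transitive closure of ib ∪ {(a,b)} and ob' as the transitive closure of ob ∪ ([Inst];ib'). Then ob' is irreflexive. -/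
/-!
Every `ib'`-step is either an `ib`-step or passes through the new edge `a → b`, and an
`[Inst];ib'`-step from an instantaneous event is, in the first case, already an `ob`-step.
So an `ob'`-path either stays in `ob` or crosses the new edge. It can cross only once: after
the crossing it sits `ib`-after `b`, and `ob`-steps into an instantaneous event are `ib`-steps,
so a second crossing would give `ib^? b a`. For the same reason a single crossing cannot close
a cycle, and `ob` itself is irreflexive.
-/

open Relation

section
variable {α : Type*}

theorem Relation.transGen_or_edge_cases {r : α → α → Prop} [IsTrans α r] {a b x y : α}
    (h : TransGen (fun u v => r u v ∨ (u = a ∧ v = b)) x y) :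
    r x y ∨ (ReflGen r x a ∧ ReflGen r b y) := by
  induction h with
  | single h =>
    rcases h with h | ⟨rfl, rfl⟩
    · exact .inl h
    · exact .inr ⟨.refl, .refl⟩
  | tail _ hzy ih =>
    rcases hzy with hzy | ⟨rfl, rfl⟩
    · rcases ih with hxz | ⟨hxa, hbz⟩
      · exact .inl (_root_.trans hxz hzy)
      · exact .inr ⟨hxa, _root_.trans hbz (.single hzy)⟩
    · rcases ih with hxa | ⟨hxa, -⟩
      · exact .inr ⟨.single hxa, .refl⟩
      · exact .inr ⟨hxa, .refl⟩

variable {Inst : Set α} {ib ob : α → α → Prop}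

theorem reflGen_ib_of_reflGen_ob (h_ob_inst : ∀ x y, ob x y → y ∈ Inst → ib x y) {x y : α}
    (h : ReflGen ob x y) (hy : y ∈ Inst) : ReflGen ib x y := by
  cases h with
  | refl => exact .refl
  | single hxy => exact .single (h_ob_inst _ _ hxy hy)

theorem inst_transGen_or_edge_cases [IsTrans α ib]
    (h_inst_ib : ∀ x y, x ∈ Inst → ib x y → ob x y) {a b x y : α} (hx : x ∈ Inst)
    (h : TransGen (fun u v => ib u v ∨ (u = a ∧ v = b)) x y) :
    ob x y ∨ (ReflGen ib x a ∧ ReflGen ib b y) :=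
  (transGen_or_edge_cases h).imp_left (h_inst_ib _ _ hx)

theorem transGen_ob_or_inst_edge_cases [IsTrans α ib] [IsTrans α ob]
    (h_ob_inst : ∀ x y, ob x y → y ∈ Inst → ib x y)
    (h_inst_ib : ∀ x y, x ∈ Inst → ib x y → ob x y) {a b x y : α} (hba : ¬ ReflGen ib b a)
    (h : TransGen (fun u v => ob u v ∨
      (u ∈ Inst ∧ TransGen (fun u v => ib u v ∨ (u = a ∧ v = b)) u v)) x y) :
    ob x y ∨ ∃ p ∈ Inst, ReflGen ob x p ∧ ReflGen ib p a ∧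
      ∃ q, ReflGen ib b q ∧ ReflGen ob q y := by
  induction h with
  | single h =>
    rcases h with h | ⟨hx, h⟩
    · exact .inl h
    · exact (inst_transGen_or_edge_cases h_inst_ib hx h).imp_right
        fun ⟨hxa, hby⟩ => ⟨_, hx, .refl, hxa, _, hby, .refl⟩
  | @tail z y _ hzy ih =>
    have hzy : ob z y ∨ z ∈ Inst ∧ ReflGen ib z a ∧ ReflGen ib b y := by
      rcases hzy with hzy | ⟨hz, hzy⟩
      · exact .inl hzy
      · exact (inst_transGen_or_edge_cases h_inst_ib hz hzy).imp_right (⟨hz, ·⟩)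
    rcases ih with hxz | ⟨p, hp, hxp, hpa, q, hbq, hqz⟩ <;>
      rcases hzy with hzy | ⟨hz, hza, hby⟩
    · exact .inl (_root_.trans hxz hzy)
    · exact .inr ⟨z, hz, .single hxz, hza, y, hby, .refl⟩
    · exact .inr ⟨p, hp, hxp, hpa, q, hbq, _root_.trans hqz (.single hzy)⟩
    · have hqz : ReflGen ib q z := reflGen_ib_of_reflGen_ob h_ob_inst hqz hz
      exact (hba (_root_.trans hbq (_root_.trans hqz hza))).elim

end

theorem extend_ibob_step_ob_irreflexive_general {α : Type*} (Inst : Set α)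
    (ib ob : α → α → Prop)
    (hib_trans : Transitive ib)
    (hob_irr : Irreflexive ob) (hob_trans : Transitive ob)
    (h_ob_inst : ∀ x y, ob x y → y ∈ Inst → ib x y)
    (h_inst_ib : ∀ x y, x ∈ Inst → ib x y → ob x y)
    (a b : α) (hab : a ≠ b) (hnba : ¬ ib b a)
    (ib' ob' : α → α → Prop)
    (hib' : ib' = Relation.TransGen (fun u v => ib u v ∨ (u = a ∧ v = b)))
    (hob' : ob' = Relation.TransGen (fun u v => ob u v ∨ (u ∈ Inst ∧ ib' u v))) :
    Irreflexive ob' := by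
  subst hib' hob'
  have : IsTrans α ib := ⟨fun _ _ _ => @hib_trans _ _ _⟩
  have : IsTrans α ob := ⟨fun _ _ _ => @hob_trans _ _ _⟩
  have hba : ¬ ReflGen ib b a := fun h => ((reflGen_iff _ _ _).1 h).elim hab hnba
  intro x hx
  obtain hxx | ⟨p, hp, hxp, hpa, q, hbq, hqx⟩ :=
    transGen_ob_or_inst_edge_cases h_ob_inst h_inst_ib hba hx
  · exact hob_irr x hxx
  · have hqp : ReflGen ib q p := reflGen_ib_of_reflGen_ob h_ob_inst (_root_.trans hqx hxp) hp
    exact hba (_root_.trans hbq (_root_.trans hqp hpa))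

/-- In the single-step extension of the proof of Theorem `extend-ibob`, the
extended observed-before relation `ob'` is still irreflexive. -/
theorem extend_ibob_step_ob_irreflexive {α : Type*} (Inst : Set α)
    (ib ob : α → α → Prop)
    (hib_irr : Irreflexive ib) (hib_trans : Transitive ib)
    (hob_irr : Irreflexive ob) (hob_trans : Transitive ob)
    (h_ob_inst : ∀ x y, ob x y → y ∈ Inst → ib x y)
    (h_inst_ib : ∀ x y, x ∈ Inst → ib x y → ob x y)
    (a b : α) (hab : a ≠ b) (hnab : ¬ ib a b) (hnba : ¬ ib b a)
    (ib' ob' : α → α → Prop)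
    (hib' : ib' = Relation.TransGen (fun u v => ib u v ∨ (u = a ∧ v = b)))
    (hob' : ob' = Relation.TransGen (fun u v => ob u v ∨ (u ∈ Inst ∧ ib' u v))) :
    Irreflexive ob' :=
  extend_ibob_step_ob_irreflexive_general Inst ib ob hib_trans hob_irr hob_trans h_ob_inst h_inst_ib
    a b hab hnba ib' ob' hib' hob'
end

section
/- Let α be a type, Inst ⊆ α a set, and let ib and ob be irreflexive transitive binary relations on α with (ob;[Inst]) ⊆ ib and ([Inst];ib) ⊆ ob. Suppose a ≠ b with ¬ib a b and ¬ib b a, and define ib' as the transitive closure of ib ∪ {(a,b)} and ob' as the transitive closure of ob ∪ ([Inst];ib'). Then (ob';[Inst]) ⊆ ib'. -/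
/-!
Since `ob` is transitive and `ob;[Inst] ⊆ ib ⊆ ib'`, every `ob'`-path collapses to a single
`ob`-step or to the shape `ob? ; [Inst] ; ib' ; ob?`. If the path ends in `Inst`, both outer
`ob`-steps are absorbed into `ib'` by the same inclusion, and transitivity of `ib'` concludes.
-/

namespace Relation

variable {α : Type*}

/-- The relation `r ∪ [I];s`. -/
def unionGuarded (r : α → α → Prop) (I : Set α) (s : α → α → Prop) : α → α → Prop :=
  fun u v => r u v ∨ (u ∈ I ∧ s u v)

variable {r s : α → α → Prop} {I : Set α}

theorem ReflGen.trans_of_mem [IsTrans α s] {x c y : α} (hxc : ReflGen r x c)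
    (hrs : ∀ x y, r x y → y ∈ I → s x y) (hc : c ∈ I) (hcy : s c y) : s x y := by
  cases hxc with
  | refl => exact hcy
  | single hxc => exact _root_.trans (hrs x c hxc hc) hcy

theorem transGen_unionGuarded_cases [IsTrans α r] [IsTrans α s]
    (hrs : ∀ x y, r x y → y ∈ I → s x y) {x y : α} (h : TransGen (unionGuarded r I s) x y) :
    r x y ∨ ∃ c d, ReflGen r x c ∧ c ∈ I ∧ s c d ∧ ReflGen r d y := by
  induction h with
  | single h =>
    rcases h with hxy | ⟨hx, hxy⟩
    · exact .inl hxy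
    · exact .inr ⟨x, _, .refl, hx, hxy, .refl⟩
  | @tail m y _ hmy ih =>
    rcases hmy with hmy | ⟨hm, hmy⟩
    · rcases ih with hxm | ⟨c, d, hxc, hc, hcd, hdm⟩
      · exact .inl (_root_.trans hxm hmy)
      · refine .inr ⟨c, d, hxc, hc, hcd, .single ?_⟩
        cases hdm with
        | refl => exact hmy
        | single hdm => exact _root_.trans hdm hmy
    · rcases ih with hxm | ⟨c, d, hxc, hc, hcd, hdm⟩
      · exact .inr ⟨m, y, .single hxm, hm, hmy, .refl⟩
      · have hdy : s d y := hdm.trans_of_mem hrs hm hmy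
        exact .inr ⟨c, y, hxc, hc, _root_.trans hcd hdy, .refl⟩

theorem transGen_unionGuarded_of_mem [IsTrans α r] [IsTrans α s]
    (hrs : ∀ x y, r x y → y ∈ I → s x y) {x y : α} (h : TransGen (unionGuarded r I s) x y)
    (hy : y ∈ I) : s x y := by
  rcases transGen_unionGuarded_cases hrs h with hxy | ⟨c, d, hxc, hc, hcd, hdy⟩
  · exact hrs x y hxy hy
  · have hcy : s c y := by
      cases hdy with
      | refl => exact hcd
      | single hdy => exact _root_.trans hcd (hrs d y hdy hy)
    exact hxc.trans_of_mem hrs hc hcy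

end Relation

open Relation

theorem extend_ibob_step_ob_inst_sub_ib_general {α : Type*} (Inst : Set α)
    (ib ob : α → α → Prop)
    (hob_trans : Transitive ob)
    (h_ob_inst : ∀ x y, ob x y → y ∈ Inst → ib x y)
    (a b : α)
    (ib' ob' : α → α → Prop)
    (hib' : ib' = Relation.TransGen (fun u v => ib u v ∨ (u = a ∧ v = b)))
    (hob' : ob' = Relation.TransGen (fun u v => ob u v ∨ (u ∈ Inst ∧ ib' u v))) :
    ∀ x y, ob' x y → y ∈ Inst → ib' x y := by
  have : IsTrans α ob := ⟨fun _ _ _ => @hob_trans _ _ _⟩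
  subst hib' hob'
  intro x y hxy hy
  exact transGen_unionGuarded_of_mem
    (fun u v huv hv => .single (.inl (h_ob_inst u v huv hv))) hxy hy

/-- In the single-step extension of the proof of Theorem `extend-ibob`, the
extended relations satisfy `(ob' ; [Inst]) ⊆ ib'`. -/
theorem extend_ibob_step_ob_inst_sub_ib {α : Type*} (Inst : Set α)
    (ib ob : α → α → Prop)
    (hib_irr : Irreflexive ib) (hib_trans : Transitive ib)
    (hob_irr : Irreflexive ob) (hob_trans : Transitive ob)
    (h_ob_inst : ∀ x y, ob x y → y ∈ Inst → ib x y)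
    (h_inst_ib : ∀ x y, x ∈ Inst → ib x y → ob x y)
    (a b : α) (hab : a ≠ b) (hnab : ¬ ib a b) (hnba : ¬ ib b a)
    (ib' ob' : α → α → Prop)
    (hib' : ib' = Relation.TransGen (fun u v => ib u v ∨ (u = a ∧ v = b)))
    (hob' : ob' = Relation.TransGen (fun u v => ob u v ∨ (u ∈ Inst ∧ ib' u v))) :
    ∀ x y, ob' x y → y ∈ Inst → ib' x y :=
  extend_ibob_step_ob_inst_sub_ib_general Inst ib ob hob_trans h_ob_inst a b ib' ob' hib' hob'
end

section
/- Let r and s be binary relations on a type α that are both transitive and irreflexive. If the transitive closure of the composition r;s is irreflexive, then the transitive closure of the union r ∪ s is irreflexive. (A cycle in the union of two transitive irreflexive relations can only arise by alternating between the two components.) -/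
/-!
Since `r` and `s` are transitive, any path of `r ∪ s` collapses to an alternating one: a single
`r`- or `s`-step, an `s`-step followed by an `r`-step, or a nonempty power of `r ; s` possibly
preceded by an `s`-step and followed by an `r`-step. A cycle of the first two kinds contradicts
irreflexivity of `r` or `s`; rotating a cycle of the last two kinds so that it begins with an
`r`-step and ends with an `s`-step, and collapsing again, gives a cycle of `(r ; s)⁺`.
-/

open Relation

section

variable {α : Type*} {r s : α → α → Prop}

def AlternatingPath (r s : α → α → Prop) (a b : α) : Prop :=
  r a b ∨ s a b ∨ Comp s r a b ∨
    ∃ c d, ReflGen s a c ∧ TransGen (Comp r s) c d ∧ ReflGen r d b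

theorem transGen_comp_tail_reflGen (hs : Transitive s) {a b c : α}
    (hab : TransGen (Comp r s) a b) (hbc : ReflGen s b c) : TransGen (Comp r s) a c := by
  obtain _ | hbc := hbc
  · exact hab
  obtain ⟨d, hd, ⟨e, hde, heb⟩⟩ := TransGen.tail'_iff.mp hab
  exact TransGen.tail' hd ⟨e, hde, hs heb hbc⟩

theorem transGen_comp_head_reflGen (hr : Transitive r) {a b c : α}
    (hab : ReflGen r a b) (hbc : TransGen (Comp r s) b c) : TransGen (Comp r s) a c := by
  obtain _ | hab := hab
  · exact hbc
  obtain ⟨d, ⟨e, hbe, hed⟩, hd⟩ := TransGen.head'_iff.mp hbc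
  exact TransGen.head' ⟨e, hr hab hbe, hed⟩ hd

theorem AlternatingPath.tail_left (hr : Transitive r) {a b c : α}
    (hab : AlternatingPath r s a b) (hbc : r b c) : AlternatingPath r s a c := by
  rcases hab with hab | hab | ⟨d, had, hdb⟩ | ⟨d, e, had, hde, heb⟩
  · exact Or.inl (hr hab hbc)
  · exact Or.inr (Or.inr (Or.inl ⟨b, hab, hbc⟩))
  · exact Or.inr (Or.inr (Or.inl ⟨d, had, hr hdb hbc⟩))
  · have hec : r e c := by
      obtain _ | heb := heb
      exacts [hbc, hr heb hbc]
    exact Or.inr (Or.inr (Or.inr ⟨d, e, had, hde, ReflGen.single hec⟩))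

theorem AlternatingPath.tail_right (hs : Transitive s) {a b c : α}
    (hab : AlternatingPath r s a b) (hbc : s b c) : AlternatingPath r s a c := by
  rcases hab with hab | hab | ⟨d, had, hdb⟩ | ⟨d, e, had, hde, heb⟩
  · exact Or.inr (Or.inr (Or.inr ⟨a, c, ReflGen.refl, TransGen.single ⟨b, hab, hbc⟩, ReflGen.refl⟩))
  · exact Or.inr (Or.inl (hs hab hbc))
  · exact Or.inr (Or.inr (Or.inr
      ⟨d, c, ReflGen.single had, TransGen.single ⟨b, hdb, hbc⟩, ReflGen.refl⟩))
  · have hdc : TransGen (Comp r s) d c := by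
      obtain _ | heb := heb
      exacts [transGen_comp_tail_reflGen hs hde (ReflGen.single hbc), hde.tail ⟨b, heb, hbc⟩]
    exact Or.inr (Or.inr (Or.inr ⟨d, c, had, hdc, ReflGen.refl⟩))

theorem alternatingPath_of_transGen_union (hr : Transitive r) (hs : Transitive s) {a b : α}
    (hab : TransGen (fun x y => r x y ∨ s x y) a b) : AlternatingPath r s a b := by
  induction hab with
  | single hab => exact hab.elim Or.inl (Or.inr ∘ Or.inl)
  | tail _ hbc ih => exact hbc.elim (ih.tail_left hr) (ih.tail_right hs)

theorem AlternatingPath.irreflexive (hr : Transitive r) (hr_irr : Irreflexive r)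
    (hs : Transitive s) (hs_irr : Irreflexive s) (h : Irreflexive (TransGen (Comp r s))) :
    Irreflexive (AlternatingPath r s) := by
  rintro a (haa | haa | ⟨b, hab, hba⟩ | ⟨b, c, hab, hbc, hca⟩)
  · exact hr_irr a haa
  · exact hs_irr a haa
  · exact h b (TransGen.single ⟨a, hba, hab⟩)
  -- rotate the cycle `a →s? b →(r;s)⁺ c →r? a`, absorbing `s?` at its end and `r?` at its start
  obtain _ | hca := hca
  · exact h b (transGen_comp_tail_reflGen hs hbc hab)
  obtain _ | hab := hab
  · exact h c (transGen_comp_head_reflGen hr (ReflGen.single hca) hbc)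
  · exact h c (TransGen.head ⟨a, hca, hab⟩ hbc)

end

/-- A cycle in the union of two transitive irreflexive relations can only arise
by alternating between the two components: if the transitive closure of the
composition `r ; s` is irreflexive, then the transitive closure of `r ∪ s` is
irreflexive. -/
theorem transGen_union_irreflexive_of_comp {α : Type*} (r s : α → α → Prop)
    (hr_trans : Transitive r) (hr_irr : Irreflexive r)
    (hs_trans : Transitive s) (hs_irr : Irreflexive s)
    (h : Irreflexive (Relation.TransGen (fun x y => ∃ c, r x c ∧ s c y))) :
    Irreflexive (Relation.TransGen (fun x y => r x y ∨ s x y)) := fun a haa =>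
  AlternatingPath.irreflexive hr_trans hr_irr hs_trans hs_irr h a
    (alternatingPath_of_transGen_union hr_trans hs_trans haa)
end

section
/- Let α be a type, P ⊆ α a set, and let i₀ and o₀ be binary relations on α. Define sequences (i_n) and (o_n) by mutual recursion: i_{n+1} is the transitive closure of i_n ∪ (o_n;[P]) and o_{n+1} is the transitive closure of o_n ∪ ([P];i_n). If there exist transitive irreflexive relations I and O on α with i₀ ⊆ I, o₀ ⊆ O, (O;[P]) ⊆ I, and ([P];I) ⊆ O, then the limit relations ⋃_n i_n and ⋃_n o_n are irreflexive. -/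
/-!
Every approximant `i n`, `o n` lies inside `I`, resp. `O`, by induction on `n`: the generators
of `i (n + 1)` lie in `I` thanks to `(O;[P]) ⊆ I`, those of `o (n + 1)` lie in `O` thanks to
`([P];I) ⊆ O`, and the transitive closures stay inside because `I` and `O` are transitive.
The limits then inherit irreflexivity from `I` and `O`.
-/

section Approximants

variable {α : Type*} {P : Set α} {i o : ℕ → α → α → Prop} {I O : α → α → Prop}

theorem approximants_le_of_closure_laws [IsTrans α I] [IsTrans α O]
    (hi : ∀ n, i (n + 1) = Relation.TransGen (fun x y => i n x y ∨ (o n x y ∧ y ∈ P)))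
    (ho : ∀ n, o (n + 1) = Relation.TransGen (fun x y => o n x y ∨ (x ∈ P ∧ i n x y)))
    (hi0 : i 0 ≤ I) (ho0 : o 0 ≤ O)
    (hOP : ∀ x y, O x y → y ∈ P → I x y) (hPI : ∀ x y, x ∈ P → I x y → O x y) :
    ∀ n, i n ≤ I ∧ o n ≤ O := by
  intro n
  induction n with
  | zero => exact ⟨hi0, ho0⟩
  | succ n ih =>
    obtain ⟨hiI, hoO⟩ := ih
    constructor
    · rw [hi n]
      refine Relation.transGen_minimal fun x y hxy => ?_
      rcases hxy with hxy | ⟨hxy, hy⟩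
      exacts [hiI x y hxy, hOP x y (hoO x y hxy) hy]
    · rw [ho n]
      refine Relation.transGen_minimal fun x y hxy => ?_
      rcases hxy with hxy | ⟨hx, hxy⟩
      exacts [hoO x y hxy, hPI x y hx (hiI x y hxy)]

end Approximants

/-- If the mutually recursive approximants of the issued-before and
observed-before relations can be embedded into transitive irreflexive relations
`I`, `O` satisfying the `[P]`-composition closure laws, then the limit relations
`⋃ n, i n` and `⋃ n, o n` are irreflexive. -/
theorem ib_ob_limit_irreflexive {α : Type*} (P : Set α) (i o : ℕ → α → α → Prop)
    (hi : ∀ n, i (n + 1) =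
      Relation.TransGen (fun x y => i n x y ∨ (o n x y ∧ y ∈ P)))
    (ho : ∀ n, o (n + 1) =
      Relation.TransGen (fun x y => o n x y ∨ (x ∈ P ∧ i n x y)))
    (h : ∃ I O : α → α → Prop,
      Transitive I ∧ Irreflexive I ∧ Transitive O ∧ Irreflexive O ∧
      (∀ x y, i 0 x y → I x y) ∧ (∀ x y, o 0 x y → O x y) ∧
      (∀ x y, O x y → y ∈ P → I x y) ∧
      (∀ x y, x ∈ P → I x y → O x y)) :
    Irreflexive (fun x y => ∃ n, i n x y) ∧
    Irreflexive (fun x y => ∃ n, o n x y) := by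
  obtain ⟨I, O, hIt, hIir, hOt, hOir, hi0, ho0, hOP, hPI⟩ := h
  have : IsTrans α I := isTrans_def.2 hIt
  have : IsTrans α O := isTrans_def.2 hOt
  have hle := approximants_le_of_closure_laws hi ho hi0 ho0 hOP hPI
  exact ⟨fun x ⟨n, hx⟩ => hIir x ((hle n).1 x x hx),
    fun x ⟨n, hx⟩ => hOir x ((hle n).2 x x hx)⟩
end

section
/- Let α be a type, P ⊆ α a set, and let i₀ and o₀ be binary relations on α. Define sequences (i_n) and (o_n) by mutual recursion: i_{n+1} is the transitive closure of i_n ∪ (o_n;[P]) and o_{n+1} is the transitive closure of o_n ∪ ([P];i_n). Then the sequences are monotone (i_n ⊆ i_{n+1} and o_n ⊆ o_{n+1} for all n), and the limits i∞ = ⋃_n i_n and o∞ = ⋃_n o_n satisfy the mutual fixpoint equations: i∞ equals the transitive closure of i∞ ∪ (o∞;[P]), and o∞ equals the transitive closure of o∞ ∪ ([P];i∞). -/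
/-!
Both sequences are increasing because each approximant is contained in the transitive closure
defining the next one. The step relations `iₙ ∪ (oₙ;[P])` and `oₙ ∪ ([P];iₙ)` then form increasing
chains, and transitive closure commutes with directed unions: a finite path uses finitely many
steps, all of which already lie in one member of the chain. Hence the transitive closure of the
limit step relation is the union of the `iₙ₊₁` (resp. `oₙ₊₁`), which is `i∞` (resp. `o∞`).
-/

namespace Relation

variable {α ι : Type*}

theorem transGen_iUnion_of_directed {s : ι → α → α → Prop} (hs : Directed (· ≤ ·) s)
    {x y : α} : TransGen (fun u v => ∃ n, s n u v) x y ↔ ∃ n, TransGen (s n) x y := by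
  refine ⟨fun h => ?_, fun ⟨n, h⟩ => TransGen.mono (fun u v huv => ⟨n, huv⟩) _ _ h⟩
  induction h with
  | single h =>
    obtain ⟨n, h⟩ := h
    exact ⟨n, .single h⟩
  | tail _ hbc ih =>
    obtain ⟨m, hab⟩ := ih
    obtain ⟨n, hbc⟩ := hbc
    obtain ⟨k, hmk, hnk⟩ := hs m n
    exact ⟨k, .tail (TransGen.mono hmk _ _ hab) (hnk _ _ hbc)⟩

theorem exists_iff_transGen_iUnion_of_monotone {r s : ℕ → α → α → Prop} (hs : Monotone s)
    (hrs : ∀ n, r n ≤ s n) (hr : ∀ n, r (n + 1) = TransGen (s n)) {x y : α} :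
    (∃ n, r n x y) ↔ TransGen (fun u v => ∃ n, s n u v) x y := by
  rw [transGen_iUnion_of_directed hs.directed_le]
  constructor
  · rintro ⟨n, h⟩
    exact ⟨n, .single (hrs n x y h)⟩
  · rintro ⟨n, h⟩
    exact ⟨n + 1, hr n ▸ h⟩

end Relation

open Relation

/-- The mutually recursive approximants of the issued-before and observed-before
relations are monotone, and their limits satisfy the mutual fixpoint equations
of the RDMA^TSO_RMW consistency definition. -/
theorem ib_ob_limit_fixpoint {α : Type*} (P : Set α) (i o : ℕ → α → α → Prop)
    (hi : ∀ n, i (n + 1) =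
      Relation.TransGen (fun x y => i n x y ∨ (o n x y ∧ y ∈ P)))
    (ho : ∀ n, o (n + 1) =
      Relation.TransGen (fun x y => o n x y ∨ (x ∈ P ∧ i n x y))) :
    (∀ n x y, i n x y → i (n + 1) x y) ∧
    (∀ n x y, o n x y → o (n + 1) x y) ∧
    (∀ x y, (∃ n, i n x y) ↔
      Relation.TransGen
        (fun u v => (∃ n, i n u v) ∨ ((∃ n, o n u v) ∧ v ∈ P)) x y) ∧
    (∀ x y, (∃ n, o n x y) ↔
      Relation.TransGen
        (fun u v => (∃ n, o n u v) ∨ (u ∈ P ∧ ∃ n, i n u v)) x y) := by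
  have i_succ : ∀ n, i n ≤ i (n + 1) := fun n x y h => hi n ▸ .single (.inl h)
  have o_succ : ∀ n, o n ≤ o (n + 1) := fun n x y h => ho n ▸ .single (.inl h)
  have i_mono : Monotone i := monotone_nat_of_le_succ i_succ
  have o_mono : Monotone o := monotone_nat_of_le_succ o_succ
  refine ⟨i_succ, o_succ, fun x y => ?_, fun x y => ?_⟩
  · simp only [← exists_and_right, ← exists_or]
    exact exists_iff_transGen_iUnion_of_monotone (s := fun n u v => i n u v ∨ (o n u v ∧ v ∈ P))
      (fun m n h u v => Or.imp (i_mono h u v) (And.imp_left (o_mono h u v)))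
      (fun n u v => .inl) hi
  · simp only [← exists_and_left, ← exists_or]
    exact exists_iff_transGen_iUnion_of_monotone (s := fun n u v => o n u v ∨ (u ∈ P ∧ i n u v))
      (fun m n h u v => Or.imp (o_mono h u v) (And.imp_right (i_mono h u v)))
      (fun n u v => .inl) ho
end
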